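/- arXiv:2312.16011 — 11 statements merged into one kernel-verified Lean document; each statement's English description precedes it below -/
import Mathlib

section
/- Let n ≥ 2 and let G be an irreducible n×n row-stochastic matrix. For α ∈ ℝ^n with 0 ≤ αᵢ ≤ 1 for all i, the matrix G(α) := (I − D(α))G + D(α) is irreducible if and only if αᵢ < 1 for every i. -/
/-! Irreducibility only sees the off-diagonal zero pattern, and the off-diagonal entries of
`G(α)` are `(1 - αᵢ) Gᵢⱼ`. So `G(α)` inherits irreducibility from `G` when every `αᵢ < 1`,
while `αᵢ = 1` kills row `i` off the diagonal and isolates the index `i`. -/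

open Matrix BigOperators

/-- A square matrix `G` is irreducible if there exist no nonempty disjoint sets
`I, J` with `I ∪ J = {1,…,n}` such that `G i j = 0` for all `i ∈ I`, `j ∈ J`. -/
def MatIrreducible {n : ℕ} (G : Matrix (Fin n) (Fin n) ℝ) : Prop :=
  ¬ ∃ I J : Set (Fin n), I.Nonempty ∧ J.Nonempty ∧ Disjoint I J ∧
      I ∪ J = Set.univ ∧ ∀ i ∈ I, ∀ j ∈ J, G i j = 0

theorem Matrix.one_sub_diagonal_mul_add_diagonal_apply_of_ne {ι R : Type*} [Fintype ι]
    [DecidableEq ι] [Ring R] (G : Matrix ι ι R) (α : ι → R) {i j : ι} (hij : i ≠ j) :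
    ((1 - diagonal α) * G + diagonal α) i j = (1 - α i) * G i j := by
  simp [sub_mul, diagonal_mul, hij]

namespace MatIrreducible

variable {n : ℕ}

theorem of_offDiag_zero_imp {A B : Matrix (Fin n) (Fin n) ℝ}
    (hAB : ∀ i j, i ≠ j → A i j = 0 → B i j = 0) (hB : MatIrreducible B) :
    MatIrreducible A := by
  rintro ⟨I, J, hI, hJ, hdisj, hunion, hzero⟩
  refine hB ⟨I, J, hI, hJ, hdisj, hunion, fun i hi j hj => ?_⟩
  have hij : i ≠ j := fun e => Set.disjoint_left.mp hdisj hi (e ▸ hj)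
  exact hAB i j hij (hzero i hi j hj)

theorem not_of_row_offDiag_eq_zero [Nontrivial (Fin n)] {A : Matrix (Fin n) (Fin n) ℝ}
    {i : Fin n} (hrow : ∀ j, i ≠ j → A i j = 0) : ¬ MatIrreducible A := by
  obtain ⟨j, hj⟩ := exists_ne i
  refine not_not.mpr ⟨{i}, {i}ᶜ, Set.singleton_nonempty i, ⟨j, hj⟩, disjoint_compl_right,
    Set.union_compl_self _, ?_⟩
  rintro _ rfl j hj
  exact hrow j (Ne.symm hj)

end MatIrreducible

theorem stmt1_general {n : ℕ} (hn : 2 ≤ n) (G : Matrix (Fin n) (Fin n) ℝ)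
    (hGirr : MatIrreducible G)
    (α : Fin n → ℝ) (hα1 : ∀ i, α i ≤ 1) :
    MatIrreducible ((1 - Matrix.diagonal α) * G + Matrix.diagonal α) ↔
      ∀ i, α i < 1 := by
  have : Nontrivial (Fin n) := Fin.nontrivial_iff_two_le.mpr hn
  refine ⟨fun hirr i => (hα1 i).lt_of_ne fun hαi => ?_, fun hlt => ?_⟩
  · refine MatIrreducible.not_of_row_offDiag_eq_zero (i := i) (fun j hij => ?_) hirr
    rw [one_sub_diagonal_mul_add_diagonal_apply_of_ne G α hij, hαi, sub_self, zero_mul]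
  · refine MatIrreducible.of_offDiag_zero_imp (fun i j hij hzero => ?_) hGirr
    rw [one_sub_diagonal_mul_add_diagonal_apply_of_ne G α hij] at hzero
    exact (mul_eq_zero.mp hzero).resolve_left (sub_ne_zero.mpr (hlt i).ne')

/-- For `n ≥ 2`, an irreducible row-stochastic `G` and `α ∈ [0,1]^n`,
the matrix `G(α) = (I − D(α))G + D(α)` is irreducible iff `α i < 1` for all `i`. -/
theorem stmt1 {n : ℕ} (hn : 2 ≤ n) (G : Matrix (Fin n) (Fin n) ℝ)
    (hGnonneg : ∀ i j, 0 ≤ G i j) (hGrow : ∀ i, ∑ j, G i j = 1)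
    (hGirr : MatIrreducible G)
    (α : Fin n → ℝ) (hα0 : ∀ i, 0 ≤ α i) (hα1 : ∀ i, α i ≤ 1) :
    MatIrreducible ((1 - Matrix.diagonal α) * G + Matrix.diagonal α) ↔
      ∀ i, α i < 1 :=
  stmt1_general hn G hGirr α hα1
end

section
/- Let G be an irreducible n×n row-stochastic matrix with stationary distribution μ > 0, and let μ̂ ∈ ℝ^n satisfy μ̂ᵢ > 0 for all i and ∑ᵢ μ̂ᵢ = 1. For α ∈ ℝ^n with 0 ≤ αᵢ < 1 for all i, the following are equivalent: (i) μ̂^⊤ G(α) = μ̂^⊤, where G(α) = (I − D(α))G + D(α); (ii) there exists a scalar c with 0 < c ≤ c* := 1 / maxᵢ(μᵢ/μ̂ᵢ) such that αᵢ = 1 − c·μᵢ/μ̂ᵢ for every i. -/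
open Matrix BigOperators

/-- For an irreducible row-stochastic `G` with stationary
distribution `μ > 0` and a positive target `μ̂` summing to one, and
`α ∈ [0,1)ⁿ`, one has `μ̂ᵀ G(α) = μ̂ᵀ` iff `α = 1 − c·(μ./μ̂)` for some
`0 < c ≤ c* = 1 / maxᵢ (μᵢ/μ̂ᵢ)`. -/
theorem stmt2 {n : ℕ} (G : Matrix (Fin n) (Fin n) ℝ)
    (hGnonneg : ∀ i j, 0 ≤ G i j) (hGrow : ∀ i, ∑ j, G i j = 1)
    (hGirr : MatIrreducible G)
    (μ : Fin n → ℝ) (hμpos : ∀ i, 0 < μ i) (hμsum : ∑ i, μ i = 1)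
    (hμstat : Matrix.vecMul μ G = μ)
    (μh : Fin n → ℝ) (hμhpos : ∀ i, 0 < μh i) (hμhsum : ∑ i, μh i = 1)
    (α : Fin n → ℝ) (hα0 : ∀ i, 0 ≤ α i) (hα1 : ∀ i, α i < 1) :
    Matrix.vecMul μh ((1 - Matrix.diagonal α) * G + Matrix.diagonal α) = μh ↔
      ∃ c : ℝ, 0 < c ∧ c ≤ 1 / (⨆ i, μ i / μh i) ∧
        ∀ i, α i = 1 - c * (μ i / μh i) := by
  have hne : n ≠ 0 := by
    rintro rfl
    simp at hμsum
  haveI : NeZero n := ⟨hne⟩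
  -- the vector v i = μh i * (1 - α i)
  set v : Fin n → ℝ := fun i => μh i * (1 - α i) with hv
  have hvpos : ∀ i, 0 < v i := fun i =>
    mul_pos (hμhpos i) (by linarith [hα1 i])
  have hvec : ∀ (w : Fin n → ℝ) (j : Fin n),
      Matrix.vecMul w G j = ∑ i, w i * G i j := by
    intro w j
    simp [Matrix.vecMul, dotProduct]
  -- maximum of μ/μh
  obtain ⟨i1, hi1⟩ := Finite.exists_max (fun i => μ i / μh i)
  have hSmax : (⨆ i, μ i / μh i) = μ i1 / μh i1 :=
    le_antisymm (ciSup_le hi1)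
      (le_ciSup (f := fun i => μ i / μh i) (Set.Finite.bddAbove (Set.finite_range _)) i1)
  have hSpos : 0 < ⨆ i, μ i / μh i := by
    rw [hSmax]; exact div_pos (hμpos i1) (hμhpos i1)
  -- reformulate stationarity
  have hmain : Matrix.vecMul μh ((1 - Matrix.diagonal α) * G + Matrix.diagonal α) = μh ↔
      Matrix.vecMul v G = v := by
    have h1 : Matrix.vecMul μh (1 - Matrix.diagonal α) = v := by
      funext j
      simp [Matrix.vecMul_sub, Matrix.vecMul_one, Matrix.vecMul_diagonal, hv]
      ring
    have h2 : Matrix.vecMul μh ((1 - Matrix.diagonal α) * G + Matrix.diagonal α)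
        = fun j => Matrix.vecMul v G j + μh j * α j := by
      funext j
      rw [Matrix.vecMul_add, ← Matrix.vecMul_vecMul, h1]
      simp [Matrix.vecMul_diagonal]
    rw [h2]
    constructor
    · intro h
      funext j
      have hj := congrFun h j
      have hvj : v j = μh j - μh j * α j := by simp only [hv]; ring
      rw [hvj]
      linarith
    · intro h
      funext j
      rw [congrFun h j]
      simp only [hv]
      ring
  rw [hmain]
  constructor
  · intro hvG
    -- minimize v/μ
    obtain ⟨i0, hi0⟩ := Finite.exists_min (fun i => v i / μ i)
    set c : ℝ := v i0 / μ i0 with hc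
    have hcpos : 0 < c := div_pos (hvpos i0) (hμpos i0)
    have hwnn : ∀ i, 0 ≤ v i - c * μ i := by
      intro i
      have h := hi0 i
      have := (le_div_iff₀ (hμpos i)).mp h
      linarith
    set w : Fin n → ℝ := fun i => v i - c * μ i with hwdef
    have hw0 : w i0 = 0 := by
      have hμne : μ i0 ≠ 0 := ne_of_gt (hμpos i0)
      simp only [hwdef, hc]
      field_simp
      ring
    have hwstat : ∀ j, ∑ i, w i * G i j = w j := by
      intro j
      have h1 := congrFun hvG j
      have h2 := congrFun hμstat j
      rw [hvec] at h1 h2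
      simp only [hwdef]
      rw [Finset.sum_congr rfl (fun i _ => by ring :
        ∀ i ∈ Finset.univ, (v i - c * μ i) * G i j = v i * G i j - c * (μ i * G i j))]
      rw [Finset.sum_sub_distrib, ← Finset.mul_sum]
      rw [Finset.sum_congr rfl (fun i _ => rfl : ∀ i ∈ Finset.univ, μ i * G i j = μ i * G i j)]
      rw [h1]
      have : ∑ i, μ i * G i j = μ j := h2
      rw [this]
    have hwzero : ∀ i, w i = 0 := by
      by_contra hcon
      push_neg at hcon
      obtain ⟨j0, hj0⟩ := hcon
      apply hGirr
      refine ⟨{i | w i ≠ 0}, {i | w i = 0}, ⟨j0, hj0⟩, ⟨i0, hw0⟩, ?_, ?_, ?_⟩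
      · rw [Set.disjoint_left]
        intro a ha hb
        exact ha hb
      · apply Set.eq_univ_of_forall
        intro a
        by_cases h : w a = 0
        · exact Or.inr h
        · exact Or.inl h
      · intro a ha b hb
        have hsum : ∑ i, w i * G i b = 0 := by rw [hwstat b]; exact hb
        have hterm : ∀ i ∈ Finset.univ, 0 ≤ w i * G i b := fun i _ =>
          mul_nonneg (hwnn i) (hGnonneg i b)
        have := (Finset.sum_eq_zero_iff_of_nonneg hterm).mp hsum a (Finset.mem_univ a)
        have hwa : 0 < w a := lt_of_le_of_ne (hwnn a) (Ne.symm ha)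
        exact (mul_eq_zero.mp this).resolve_left (ne_of_gt hwa)
    have hveq : ∀ i, v i = c * μ i := by
      intro i
      have := hwzero i
      simp only [hwdef] at this
      linarith
    have halpha : ∀ i, α i = 1 - c * (μ i / μh i) := by
      intro i
      have h := hveq i
      simp only [hv] at h
      have hμhne : μh i ≠ 0 := ne_of_gt (hμhpos i)
      have h2 : 1 - α i = c * (μ i / μh i) := by
        field_simp
        nlinarith [h]
      linarith [h2]
    refine ⟨c, hcpos, ?_, halpha⟩
    · rw [hSmax]
      have h1 : 0 ≤ α i1 := hα0 i1
      rw [halpha i1] at h1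
      rw [le_div_iff₀ (div_pos (hμpos i1) (hμhpos i1))]
      linarith
  · rintro ⟨c, hcpos, hcle, hα⟩
    have hveq : ∀ i, v i = c * μ i := by
      intro i
      simp only [hv, hα i]
      have hμhne : μh i ≠ 0 := ne_of_gt (hμhpos i)
      field_simp
      ring
    funext j
    rw [hvec]
    have h2 := congrFun hμstat j
    rw [hvec] at h2
    calc ∑ i, v i * G i j = ∑ i, c * (μ i * G i j) := by
          apply Finset.sum_congr rfl
          intro i _
          rw [hveq i]; ring
      _ = c * ∑ i, μ i * G i j := by rw [Finset.mul_sum]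
      _ = c * μ j := by rw [h2]
      _ = v j := (hveq j).symm
end

section
/- Let G be an irreducible n×n row-stochastic matrix with stationary distribution μ > 0, and let μ̂ ∈ ℝ^n satisfy μ̂ᵢ > 0 for all i and ∑ᵢ μ̂ᵢ = 1. Set c* := 1 / maxᵢ(μᵢ/μ̂ᵢ) and define α* ∈ ℝ^n by α*ᵢ = 1 − c*·μᵢ/μ̂ᵢ, and Δ(α*) := D(α*)(I − G). Then: (i) 0 ≤ α*ᵢ < 1 for all i; (ii) Δ(α*)·1ₙ = 0; (iii) G + Δ(α*) is row-stochastic; (iv) μ̂^⊤ (G + Δ(α*)) = μ̂^⊤; and (v) Δ(α*)_{i,j} = 0 whenever i ≠ j and G_{i,j} = 0, i.e., the support of Δ(α*) is contained in the support of G + I. In particular, the target stationary distribution problem with support constraint Ω = supp(G + I) is always feasible. -/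
open Matrix BigOperators

/-- With `c* = 1 / maxᵢ (μᵢ/μ̂ᵢ)`, `α*ᵢ = 1 − c*·μᵢ/μ̂ᵢ` and
`Δ(α*) = D(α*)(I − G)`: (i) `0 ≤ α*ᵢ < 1`; (ii) `Δ(α*)·1 = 0`;
(iii) `G + Δ(α*)` is row-stochastic; (iv) `μ̂ᵀ(G + Δ(α*)) = μ̂ᵀ`;
(v) `supp(Δ(α*)) ⊆ supp(G + I)`. In particular the TSDP with support constraint
`Ω = supp(G + I)` is always feasible. -/
theorem stmt3 {n : ℕ} (G : Matrix (Fin n) (Fin n) ℝ)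
    (hGnonneg : ∀ i j, 0 ≤ G i j) (hGrow : ∀ i, ∑ j, G i j = 1)
    (hGirr : MatIrreducible G)
    (μ : Fin n → ℝ) (hμpos : ∀ i, 0 < μ i) (hμsum : ∑ i, μ i = 1)
    (hμstat : Matrix.vecMul μ G = μ)
    (μh : Fin n → ℝ) (hμhpos : ∀ i, 0 < μh i) (hμhsum : ∑ i, μh i = 1)
    (cstar : ℝ) (hcstar : cstar = 1 / (⨆ i, μ i / μh i))
    (αstar : Fin n → ℝ) (hαstar : ∀ i, αstar i = 1 - cstar * (μ i / μh i))
    (Δ : Matrix (Fin n) (Fin n) ℝ)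
    (hΔ : Δ = Matrix.diagonal αstar * (1 - G)) :
    (∀ i, 0 ≤ αstar i ∧ αstar i < 1) ∧
    (Δ *ᵥ (fun _ => (1 : ℝ)) = 0) ∧
    ((∀ i j, 0 ≤ (G + Δ) i j) ∧ (∀ i, ∑ j, (G + Δ) i j = 1)) ∧
    Matrix.vecMul μh (G + Δ) = μh ∧
    (∀ i j, i ≠ j → G i j = 0 → Δ i j = 0) := by
  have hn : 0 < n := by
    rcases Nat.eq_zero_or_pos n with h | h
    · exfalso; subst h; simpa using hμsum
    · exact h
  haveI : Nonempty (Fin n) := ⟨⟨0, hn⟩⟩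
  set M := ⨆ i, μ i / μh i with hM
  have hbdd : BddAbove (Set.range fun i => μ i / μh i) :=
    Set.Finite.bddAbove (Set.finite_range _)
  have hle : ∀ i, μ i / μh i ≤ M := fun i => le_ciSup hbdd i
  have hMpos : 0 < M :=
    lt_of_lt_of_le (div_pos (hμpos ⟨0, hn⟩) (hμhpos _)) (hle _)
  -- (i)
  have hα0 : ∀ i, 0 ≤ αstar i := by
    intro i
    have h1 : (μ i / μh i) / M ≤ 1 := (div_le_one hMpos).2 (hle i)
    have h2 : cstar * (μ i / μh i) = (μ i / μh i) / M := by
      rw [hcstar]; ring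
    rw [hαstar, h2]; linarith
  have hα1 : ∀ i, αstar i < 1 := by
    intro i
    have h2 : 0 < cstar * (μ i / μh i) := by
      rw [hcstar]
      exact mul_pos (by positivity) (div_pos (hμpos i) (hμhpos i))
    rw [hαstar]; linarith
  -- entrywise formula
  have hΔe : ∀ i j, Δ i j = αstar i * ((if i = j then (1 : ℝ) else 0) - G i j) := by
    intro i j
    rw [hΔ]
    simp [Matrix.diagonal_mul, Matrix.sub_apply, Matrix.one_apply]
  have hrow0 : ∀ i, ∑ j, ((if i = j then (1 : ℝ) else 0) - G i j) = 0 := by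
    intro i
    rw [Finset.sum_sub_distrib, hGrow]
    simp
  have hΔrow : ∀ i, ∑ j, Δ i j = 0 := by
    intro i
    simp only [hΔe, ← Finset.mul_sum, hrow0, mul_zero]
  have hGle1 : ∀ i j, G i j ≤ 1 := by
    intro i j
    calc G i j ≤ ∑ k, G i k :=
          Finset.single_le_sum (fun k _ => hGnonneg i k) (Finset.mem_univ j)
      _ = 1 := hGrow i
  have hstat : ∀ j, ∑ i, μ i * G i j = μ j := by
    intro j
    have := congrFun hμstat j
    simpa [Matrix.vecMul, dotProduct] using this
  refine ⟨fun i => ⟨hα0 i, hα1 i⟩, ?_, ⟨?_, ?_⟩, ?_, ?_⟩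
  · -- (ii)
    funext i
    simp only [Matrix.mulVec, dotProduct, mul_one]
    simpa using hΔrow i
  · -- (iii) nonneg
    intro i j
    rw [Matrix.add_apply, hΔe i j]
    by_cases h : i = j
    · subst h
      rw [if_pos rfl]
      nlinarith [hGnonneg i i, hGle1 i i, hα0 i, hα1 i]
    · simp only [if_neg h]
      nlinarith [hGnonneg i j, hα0 i, hα1 i]
  · -- (iii) row sums
    intro i
    simp only [Matrix.add_apply, Finset.sum_add_distrib, hGrow, hΔrow, add_zero]
  · -- (iv)
    funext j
    have hkey : ∀ i, μh i * ((G + Δ) i j)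
        = cstar * (μ i * G i j) + (if i = j then μh i * αstar i else 0) := by
      intro i
      have h1 : μh i * (1 - αstar i) = cstar * μ i := by
        have hne : μh i ≠ 0 := (hμhpos i).ne'
        rw [hαstar]
        field_simp
        ring
      rw [Matrix.add_apply, hΔe i j]
      by_cases h : i = j
      · subst h
        rw [if_pos rfl, if_pos rfl]
        linear_combination (G i i) * h1
      · rw [if_neg h, if_neg h]
        linear_combination (G i j) * h1
    simp only [Matrix.vecMul, dotProduct]
    rw [Finset.sum_congr rfl (fun i _ => hkey i), Finset.sum_add_distrib,
      ← Finset.mul_sum]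
    rw [Finset.sum_ite_eq' Finset.univ j (fun i => μh i * αstar i)]
    simp only [Finset.mem_univ, if_pos, hstat j]
    have hne : μh j ≠ 0 := (hμhpos j).ne'
    rw [hαstar j]
    field_simp
    ring
  · -- (v)
    intro i j hij hG
    rw [hΔe i j, if_neg hij, hG]
    ring
end

section
/- Let G be an n×n row-stochastic matrix, let μ, μ̂ ∈ ℝ^n be positive vectors, and for c > 0 define α(c) ∈ ℝ^n by α(c)ᵢ = 1 − c·μᵢ/μ̂ᵢ and Δ(α(c)) := D(α(c))(I − G). Let c* := 1 / maxᵢ(μᵢ/μ̂ᵢ). Then for all c, c' with 0 < c ≤ c' ≤ c*: 0 ≤ α(c')ᵢ ≤ α(c)ᵢ < 1 for every i, and |Δ(α(c'))_{i,j}| ≤ |Δ(α(c))_{i,j}| for all i, j. Consequently, among all these perturbations, Δ(α(c*)) minimizes every monotone matrix norm (a norm ‖·‖ with |A| ≤ |B| entrywise implying ‖A‖ ≤ ‖B‖). -/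
/-!
Writing `rᵢ = μᵢ/μ̂ᵢ`, the bound `c' ≤ c*` says exactly `c' rᵢ ≤ 1` for every `i`, so
`α(c')ᵢ = 1 - c' rᵢ` is nonnegative and decreases in `c'`. Row `i` of `D(α)(I - G)` is row `i`
of `I - G` scaled by `αᵢ`, hence its entries shrink in absolute value as `αᵢ` shrinks in `[0, ∞)`;
in particular `c = c*` gives the entrywise smallest matrix.
-/

open Matrix

theorem Matrix.abs_diagonal_mul_apply_le {ι κ R : Type*} [Fintype ι] [DecidableEq ι]
    [Ring R] [LinearOrder R] [IsStrictOrderedRing R] {a b : ι → R}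
    (ha : ∀ i, 0 ≤ a i) (hab : ∀ i, a i ≤ b i) (M : Matrix ι κ R) (i : ι) (j : κ) :
    |(diagonal a * M) i j| ≤ |(diagonal b * M) i j| := by
  rw [diagonal_mul, diagonal_mul, abs_mul, abs_mul, abs_of_nonneg (ha i),
    abs_of_nonneg ((ha i).trans (hab i))]
  exact mul_le_mul_of_nonneg_right (hab i) (abs_nonneg _)

theorem mul_le_one_of_le_one_div_ciSup {ι : Type*} [Finite ι] {r : ι → ℝ}
    (hr : ∀ i, 0 < r i) {c : ℝ} (hc : 0 ≤ c) (hcS : c ≤ 1 / ⨆ i, r i) (i : ι) :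
    c * r i ≤ 1 := by
  have hri : r i ≤ ⨆ i, r i := le_ciSup (Set.finite_range r).bddAbove i
  have hS : 0 < ⨆ i, r i := (hr i).trans_le hri
  calc c * r i ≤ c * ⨆ i, r i := mul_le_mul_of_nonneg_left hri hc
    _ ≤ 1 := (le_div_iff₀ hS).mp hcS

theorem one_sub_mul_bounds {r c c' : ℝ} (hr : 0 < r) (hc : 0 < c) (hcc' : c ≤ c')
    (hc'r : c' * r ≤ 1) :
    0 ≤ 1 - c' * r ∧ 1 - c' * r ≤ 1 - c * r ∧ 1 - c * r < 1 := by
  have hmono : c * r ≤ c' * r := mul_le_mul_of_nonneg_right hcc' hr.le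
  have hpos : 0 < c * r := mul_pos hc hr
  exact ⟨by linarith, by linarith, by linarith⟩

theorem stmt4_general {n : ℕ} (G : Matrix (Fin n) (Fin n) ℝ)
    (μ μh : Fin n → ℝ) (hμpos : ∀ i, 0 < μ i) (hμhpos : ∀ i, 0 < μh i)
    (cstar : ℝ) (hcstar : cstar = 1 / (⨆ i, μ i / μh i))
    (α : ℝ → Fin n → ℝ) (hα : ∀ c i, α c i = 1 - c * (μ i / μh i)) :
    (∀ c c' : ℝ, 0 < c → c ≤ c' → c' ≤ cstar →
      (∀ i, 0 ≤ α c' i ∧ α c' i ≤ α c i ∧ α c i < 1) ∧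
      (∀ i j, |(Matrix.diagonal (α c') * (1 - G)) i j| ≤
        |(Matrix.diagonal (α c) * (1 - G)) i j|)) ∧
    (∀ N : Matrix (Fin n) (Fin n) ℝ → ℝ,
      (∀ A B : Matrix (Fin n) (Fin n) ℝ,
        (∀ i j, |A i j| ≤ |B i j|) → N A ≤ N B) →
      ∀ c : ℝ, 0 < c → c ≤ cstar →
        N (Matrix.diagonal (α cstar) * (1 - G)) ≤
          N (Matrix.diagonal (α c) * (1 - G))) := by
  have hratio : ∀ i, 0 < μ i / μh i := fun i => div_pos (hμpos i) (hμhpos i)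
  have key : ∀ c c' : ℝ, 0 < c → c ≤ c' → c' ≤ cstar →
      (∀ i, 0 ≤ α c' i ∧ α c' i ≤ α c i ∧ α c i < 1) ∧
      (∀ i j, |(Matrix.diagonal (α c') * (1 - G)) i j| ≤
        |(Matrix.diagonal (α c) * (1 - G)) i j|) := by
    intro c c' hc hcc' hc'star
    have hbounds : ∀ i, 0 ≤ α c' i ∧ α c' i ≤ α c i ∧ α c i < 1 := fun i => by
      rw [hα, hα]
      exact one_sub_mul_bounds (hratio i) hc hcc'
        (mul_le_one_of_le_one_div_ciSup hratio (hc.le.trans hcc') (hcstar ▸ hc'star) i)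
    exact ⟨hbounds, abs_diagonal_mul_apply_le (fun i => (hbounds i).1)
      (fun i => (hbounds i).2.1) (1 - G)⟩
  exact ⟨key, fun N hN c hc hcs => hN _ _ (key c cstar hc hcs le_rfl).2⟩

/-- For `0 < c ≤ c' ≤ c* = 1 / maxᵢ (μᵢ/μ̂ᵢ)`, with
`α(c)ᵢ = 1 − c·μᵢ/μ̂ᵢ` and `Δ(α(c)) = D(α(c))(I − G)`, one has
`0 ≤ α(c')ᵢ ≤ α(c)ᵢ < 1` and `|Δ(α(c'))_{ij}| ≤ |Δ(α(c))_{ij}|`; consequently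
`Δ(α(c*))` minimizes every monotone matrix norm among these perturbations. -/
theorem stmt4 {n : ℕ} (G : Matrix (Fin n) (Fin n) ℝ)
    (hGnonneg : ∀ i j, 0 ≤ G i j) (hGrow : ∀ i, ∑ j, G i j = 1)
    (μ μh : Fin n → ℝ) (hμpos : ∀ i, 0 < μ i) (hμhpos : ∀ i, 0 < μh i)
    (cstar : ℝ) (hcstar : cstar = 1 / (⨆ i, μ i / μh i))
    (α : ℝ → Fin n → ℝ) (hα : ∀ c i, α c i = 1 - c * (μ i / μh i)) :
    (∀ c c' : ℝ, 0 < c → c ≤ c' → c' ≤ cstar →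
      (∀ i, 0 ≤ α c' i ∧ α c' i ≤ α c i ∧ α c i < 1) ∧
      (∀ i j, |(Matrix.diagonal (α c') * (1 - G)) i j| ≤
        |(Matrix.diagonal (α c) * (1 - G)) i j|)) ∧
    (∀ N : Matrix (Fin n) (Fin n) ℝ → ℝ,
      (∀ A B : Matrix (Fin n) (Fin n) ℝ,
        (∀ i j, |A i j| ≤ |B i j|) → N A ≤ N B) →
      ∀ c : ℝ, 0 < c → c ≤ cstar →
        N (Matrix.diagonal (α cstar) * (1 - G)) ≤
          N (Matrix.diagonal (α c) * (1 - G))) :=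
  stmt4_general G μ μh hμpos hμhpos cstar hcstar α hα
end

section
/- Let G be an n×n row-stochastic matrix, let μ, μ̂ ∈ ℝ^n be positive vectors, set r_* := minᵢ(μᵢ/μ̂ᵢ), r* := maxᵢ(μᵢ/μ̂ᵢ), c* := 1/r*, and define α* ∈ ℝ^n by α*ᵢ = 1 − c*·μᵢ/μ̂ᵢ. Then for all i, j: |Δ(α*)_{i,j}| ≤ ((r* − r_*)/r*)·|(I − G)_{i,j}|, where Δ(α*) := D(α*)(I − G). -/
lemma abs_one_sub_one_div_mul_le {K : Type*} [Field K] [LinearOrder K] [IsStrictOrderedRing K]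
    {lo x hi : K} (hlo : lo ≤ x) (hhi : x ≤ hi) (hpos : 0 < hi) :
    |1 - 1 / hi * x| ≤ (hi - lo) / hi := by
  rw [one_div_mul_eq_div, sub_div, div_self hpos.ne', abs_le]
  have hlo' : lo / hi ≤ x / hi := div_le_div_of_nonneg_right hlo hpos.le
  have hhi' : x / hi ≤ 1 := (div_le_one hpos).2 hhi
  constructor <;> linarith

theorem stmt5_general {n : ℕ} (G : Matrix (Fin n) (Fin n) ℝ)
    (μ μh : Fin n → ℝ) (hμpos : ∀ i, 0 < μ i) (hμhpos : ∀ i, 0 < μh i)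
    (rlow rstar cstar : ℝ)
    (hrlow : rlow = ⨅ i, μ i / μh i) (hrstar : rstar = ⨆ i, μ i / μh i)
    (hcstar : cstar = 1 / rstar)
    (αstar : Fin n → ℝ) (hαstar : ∀ i, αstar i = 1 - cstar * (μ i / μh i)) :
    ∀ i j, |(Matrix.diagonal αstar * (1 - G)) i j| ≤
      ((rstar - rlow) / rstar) * |(1 - G) i j| := by
  intro i j
  have hfin := Set.finite_range fun k => μ k / μh k
  have hlow : rlow ≤ μ i / μh i := hrlow ▸ ciInf_le hfin.bddBelow i
  have hhigh : μ i / μh i ≤ rstar := hrstar ▸ le_ciSup hfin.bddAbove i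
  have hpos : 0 < rstar := (div_pos (hμpos i) (hμhpos i)).trans_le hhigh
  rw [Matrix.diagonal_mul, abs_mul, hαstar, hcstar]
  exact mul_le_mul_of_nonneg_right (abs_one_sub_one_div_mul_le hlow hhigh hpos) (abs_nonneg _)

/-- With `r_* = minᵢ (μᵢ/μ̂ᵢ)`, `r* = maxᵢ (μᵢ/μ̂ᵢ)`,
`c* = 1/r*`, and `α*ᵢ = 1 − c*·μᵢ/μ̂ᵢ`, the perturbation
`Δ(α*) = D(α*)(I − G)` satisfies
`|Δ(α*)_{ij}| ≤ ((r* − r_*)/r*)·|(I − G)_{ij}|` for all `i, j`. -/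
theorem stmt5 {n : ℕ} (G : Matrix (Fin n) (Fin n) ℝ)
    (hGnonneg : ∀ i j, 0 ≤ G i j) (hGrow : ∀ i, ∑ j, G i j = 1)
    (μ μh : Fin n → ℝ) (hμpos : ∀ i, 0 < μ i) (hμhpos : ∀ i, 0 < μh i)
    (rlow rstar cstar : ℝ)
    (hrlow : rlow = ⨅ i, μ i / μh i) (hrstar : rstar = ⨆ i, μ i / μh i)
    (hcstar : cstar = 1 / rstar)
    (αstar : Fin n → ℝ) (hαstar : ∀ i, αstar i = 1 - cstar * (μ i / μh i)) :
    ∀ i j, |(Matrix.diagonal αstar * (1 - G)) i j| ≤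
      ((rstar - rlow) / rstar) * |(1 - G) i j| :=
  stmt5_general G μ μh hμpos hμhpos rlow rstar cstar hrlow hrstar hcstar αstar hαstar
end

section
/- Let G be an n×n row-stochastic matrix and let μ̂ ∈ ℝ^n have μ̂ᵢ > 0 for all i. Then every matrix Δ ∈ ℝ^{n×n} satisfying μ̂^⊤(G + Δ) = μ̂^⊤ obeys ∑_{i,j} |Δ_{i,j}| ≥ (∑_j |(μ̂^⊤(I − G))_j|) / (∑_i μ̂ᵢ), i.e., the component-wise ℓ1 norm of Δ is at least ‖(I − G)^⊤ μ̂‖₁ / ‖μ̂‖₁. Moreover, if μ is a stationary distribution of G, then ‖(I − G)^⊤ μ̂‖₁ = ‖(I − G)^⊤(μ̂ − μ)‖₁. -/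
/-!
If `μ̂ᵀ(G + Δ) = μ̂ᵀ`, then `μ̂ᵀ(I - G) = μ̂ᵀΔ`, and the ℓ1 norm of a vector-matrix product
`vᵀΔ` is at most `‖v‖₁ ‖Δ‖₁`; for positive `μ̂` this norm is `∑ᵢ μ̂ᵢ`. The second claim holds
because a stationary `μ` is annihilated by `I - G`.
-/

open Matrix BigOperators

namespace Matrix

variable {ι κ R : Type*} [Fintype ι]

theorem vecMul_one_sub_eq_vecMul_of_vecMul_add_eq [DecidableEq ι] [Ring R]
    {v : ι → R} {G Δ : Matrix ι ι R} (h : vecMul v (G + Δ) = v) :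
    vecMul v (1 - G) = vecMul v Δ := by
  rw [vecMul_add] at h
  rw [vecMul_sub, vecMul_one]
  exact sub_eq_of_eq_add' h.symm

theorem vecMul_one_sub_eq_zero_of_vecMul_eq [DecidableEq ι] [Ring R]
    {v : ι → R} {G : Matrix ι ι R} (h : vecMul v G = v) : vecMul v (1 - G) = 0 := by
  rw [vecMul_sub, vecMul_one, h, sub_self]

theorem sum_abs_vecMul_le [Fintype κ] [CommRing R] [LinearOrder R] [IsStrictOrderedRing R]
    (v : ι → R) (A : Matrix ι κ R) :
    ∑ j, |vecMul v A j| ≤ (∑ i, |v i|) * ∑ i, ∑ j, |A i j| :=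
  calc ∑ j, |vecMul v A j|
      ≤ ∑ j, ∑ i, |v i| * |A i j| := by
        gcongr with j
        simpa only [vecMul, dotProduct, abs_mul] using
          Finset.abs_sum_le_sum_abs (fun i => v i * A i j) Finset.univ
    _ = ∑ i, |v i| * ∑ j, |A i j| := by
        rw [Finset.sum_comm]
        simp only [Finset.mul_sum]
    _ ≤ ∑ i, (∑ k, |v k|) * ∑ j, |A i j| := by
        gcongr with i
        exact Finset.single_le_sum (fun k _ => abs_nonneg (v k)) (Finset.mem_univ i)
    _ = (∑ i, |v i|) * ∑ i, ∑ j, |A i j| := (Finset.mul_sum _ _ _).symm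

end Matrix

theorem stmt6_general {n : ℕ} (G : Matrix (Fin n) (Fin n) ℝ)
    (μh : Fin n → ℝ) (hμhpos : ∀ i, 0 < μh i) :
    (∀ Δ : Matrix (Fin n) (Fin n) ℝ,
      Matrix.vecMul μh (G + Δ) = μh →
      (∑ j, |Matrix.vecMul μh (1 - G) j|) / (∑ i, μh i) ≤
        ∑ i, ∑ j, |Δ i j|) ∧
    (∀ μ : Fin n → ℝ, (∀ i, 0 < μ i) → (∑ i, μ i = 1) →
      Matrix.vecMul μ G = μ →
      ∑ j, |Matrix.vecMul μh (1 - G) j| =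
        ∑ j, |Matrix.vecMul (μh - μ) (1 - G) j|) := by
  have hμh_abs : ∀ i, |μh i| = μh i := fun i => abs_of_pos (hμhpos i)
  refine ⟨fun Δ hΔ => ?_, fun μ _ _ hstat => ?_⟩
  · refine div_le_of_le_mul₀ (Finset.sum_nonneg fun i _ => (hμhpos i).le)
      (by positivity) ?_
    rw [vecMul_one_sub_eq_vecMul_of_vecMul_add_eq hΔ, mul_comm]
    simpa only [hμh_abs] using sum_abs_vecMul_le μh Δ
  · rw [sub_vecMul, vecMul_one_sub_eq_zero_of_vecMul_eq hstat, sub_zero]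

/-- Any `Δ` with `μ̂ᵀ(G + Δ) = μ̂ᵀ` satisfies
`‖Δ‖₁ ≥ ‖(I − G)ᵀ μ̂‖₁ / ‖μ̂‖₁` (component-wise ℓ1 norm); moreover, if `μ` is a
stationary distribution of `G` then `‖(I − G)ᵀ μ̂‖₁ = ‖(I − G)ᵀ(μ̂ − μ)‖₁`. -/
theorem stmt6 {n : ℕ} (G : Matrix (Fin n) (Fin n) ℝ)
    (hGnonneg : ∀ i j, 0 ≤ G i j) (hGrow : ∀ i, ∑ j, G i j = 1)
    (μh : Fin n → ℝ) (hμhpos : ∀ i, 0 < μh i) :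
    (∀ Δ : Matrix (Fin n) (Fin n) ℝ,
      Matrix.vecMul μh (G + Δ) = μh →
      (∑ j, |Matrix.vecMul μh (1 - G) j|) / (∑ i, μh i) ≤
        ∑ i, ∑ j, |Δ i j|) ∧
    (∀ μ : Fin n → ℝ, (∀ i, 0 < μ i) → (∑ i, μ i = 1) →
      Matrix.vecMul μ G = μ →
      ∑ j, |Matrix.vecMul μh (1 - G) j| =
        ∑ j, |Matrix.vecMul (μh - μ) (1 - G) j|) :=
  stmt6_general G μh hμhpos
end

section
/- Let G be an irreducible n×n row-stochastic matrix with stationary distribution μ > 0, let j be an index, let λ > 0, and set μ̂ := (μ + λ eⱼ)/(1 + λ). Assume λ ≥ μᵢ − μⱼ for all i (equivalently, μ̂ⱼ = max_k μ̂_k). Define Δ* := (λ/(μⱼ + λ))·eⱼ eⱼ^⊤ (I − G). Then Δ* is a feasible solution of the target stationary distribution problem, i.e., Δ*·1ₙ = 0, G + Δ* ≥ 0, and μ̂^⊤(G + Δ*) = μ̂^⊤; and Δ* is optimal for the component-wise ℓ1 norm: for every Δ ∈ ℝ^{n×n} with Δ·1ₙ = 0, G + Δ ≥ 0, and μ̂^⊤(G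 + Δ) = μ̂^⊤, one has ∑_{i,k} |Δ*_{i,k}| ≤ ∑_{i,k} |Δ_{i,k}|. -/
open Matrix BigOperators

/-- With `μ̂ = (μ + λeⱼ)/(1 + λ)`, `λ > 0`, `λ ≥ μᵢ − μⱼ` for all
`i`, the matrix `Δ* = (λ/(μⱼ + λ))·eⱼeⱼᵀ(I − G)` is feasible for the TSDP
(`Δ*·1 = 0`, `G + Δ* ≥ 0`, `μ̂ᵀ(G + Δ*) = μ̂ᵀ`) and optimal for the
component-wise ℓ1 norm among all feasible `Δ`. -/
theorem stmt9 {n : ℕ} (G : Matrix (Fin n) (Fin n) ℝ)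
    (hGnonneg : ∀ i j, 0 ≤ G i j) (hGrow : ∀ i, ∑ j, G i j = 1)
    (hGirr : MatIrreducible G)
    (μ : Fin n → ℝ) (hμpos : ∀ i, 0 < μ i) (hμsum : ∑ i, μ i = 1)
    (hμstat : Matrix.vecMul μ G = μ)
    (j : Fin n) (lam : ℝ) (hlam : 0 < lam)
    (hlam2 : ∀ i, μ i - μ j ≤ lam)
    (μh : Fin n → ℝ)
    (hμh : μh = (1 + lam)⁻¹ • (μ + lam • (Pi.single j 1 : Fin n → ℝ)))
    (Δstar : Matrix (Fin n) (Fin n) ℝ)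
    (hΔstar : Δstar = (lam / (μ j + lam)) •
      (Matrix.single j j 1 * (1 - G))) :
    (Δstar *ᵥ (fun _ => (1 : ℝ)) = 0) ∧
    (∀ i k, 0 ≤ (G + Δstar) i k) ∧
    Matrix.vecMul μh (G + Δstar) = μh ∧
    (∀ Δ : Matrix (Fin n) (Fin n) ℝ,
      Δ *ᵥ (fun _ => (1 : ℝ)) = 0 →
      (∀ i k, 0 ≤ (G + Δ) i k) →
      Matrix.vecMul μh (G + Δ) = μh →
      ∑ i, ∑ k, |Δstar i k| ≤ ∑ i, ∑ k, |Δ i k|) := by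
  have h1l : (0:ℝ) < 1 + lam := by linarith
  have hμj : (0:ℝ) < μ j := hμpos j
  have hml : (0:ℝ) < μ j + lam := by linarith
  set c := lam / (μ j + lam) with hcdef
  have hc0 : 0 < c := div_pos hlam hml
  have hc1 : c ≤ 1 := by rw [div_le_one hml]; linarith
  have hμhv : ∀ i, μh i = (1 + lam)⁻¹ * (μ i + lam * (if i = j then 1 else 0)) := by
    intro i
    simp only [hμh, Pi.smul_apply, Pi.add_apply, Pi.single_apply, smul_eq_mul]
  have hΔ : ∀ i k, Δstar i k = if i = j then c * ((if k = j then 1 else 0) - G j k) else 0 := by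
    intro i k
    rw [hΔstar]
    rcases eq_or_ne i j with h | h
    · subst h; simp [Matrix.sub_apply, Matrix.one_apply, eq_comm]
    · simp [h, Matrix.single_mul_apply_of_ne (c := (1:ℝ)) j j i k h]
  have part1 : Δstar *ᵥ (fun _ => (1:ℝ)) = 0 := by
    funext i
    simp only [Matrix.mulVec, dotProduct, mul_one, Pi.zero_apply]
    rcases eq_or_ne i j with h | h
    · simp only [hΔ, if_pos h]
      rw [← Finset.mul_sum, Finset.sum_sub_distrib,
        Finset.sum_ite_eq' Finset.univ j (fun _ => (1:ℝ))]
      simp [hGrow j]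
    · simp [hΔ, h]
  have part2 : ∀ i k, 0 ≤ (G + Δstar) i k := by
    intro i k
    simp only [Matrix.add_apply, hΔ]
    rcases eq_or_ne i j with h | h
    · rcases eq_or_ne k j with h2 | h2
      · simp [h, h2]
        nlinarith [hGnonneg j j]
      · simp [h, h2]
        nlinarith [hGnonneg j k]
    · simp [h, hGnonneg i k]
  have hstat : ∀ k, ∑ i, μ i * G i k = μ k := by
    intro k
    have := congrFun hμstat k
    simpa [Matrix.vecMul, dotProduct] using this
  have hμhG : ∀ k, ∑ i, μh i * G i k = (1 + lam)⁻¹ * (μ k + lam * G j k) := by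
    intro k
    calc ∑ i, μh i * G i k
        = ∑ i, ((1+lam)⁻¹ * (μ i * G i k)
            + (1+lam)⁻¹ * lam * (if i = j then G i k else 0)) := by
          refine Finset.sum_congr rfl fun i _ => ?_
          rw [hμhv i]
          rcases eq_or_ne i j with h | h <;> simp [h] <;> try ring
      _ = (1+lam)⁻¹ * (∑ i, μ i * G i k)
            + (1+lam)⁻¹ * lam * (∑ i, if i = j then G i k else 0) := by
          rw [Finset.sum_add_distrib, ← Finset.mul_sum, ← Finset.mul_sum]
      _ = (1 + lam)⁻¹ * (μ k + lam * G j k) := by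
          rw [hstat k, Finset.sum_ite_eq' Finset.univ j (fun i => G i k)]
          simp
          ring
  have hμhj : μh j = (1+lam)⁻¹ * (μ j + lam) := by rw [hμhv j]; simp
  have hμhjpos : 0 < μh j := by rw [hμhj]; positivity
  have hkey : c * μh j = (1+lam)⁻¹ * lam := by
    rw [hμhj, hcdef]; field_simp
  have hsplit : ∀ (Δ : Matrix (Fin n) (Fin n) ℝ) k,
      ∑ i, μh i * (G i k + Δ i k) = (∑ i, μh i * G i k) + ∑ i, μh i * Δ i k := by
    intro Δ k
    rw [← Finset.sum_add_distrib]
    exact Finset.sum_congr rfl fun i _ => mul_add _ _ _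
  have part3 : Matrix.vecMul μh (G + Δstar) = μh := by
    funext k
    simp only [Matrix.vecMul, dotProduct, Matrix.add_apply]
    rw [hsplit, hμhG k]
    have hΔsum : ∑ i, μh i * Δstar i k
        = μh j * (c * ((if k = j then 1 else 0) - G j k)) := by
      simp only [hΔ, mul_ite, mul_zero]
      exact Finset.sum_ite_eq' Finset.univ j _ |>.trans (by simp)
    rw [hΔsum, ← mul_assoc, mul_comm (μh j) c, hkey, hμhv k]
    ring
  refine ⟨part1, part2, part3, ?_⟩
  intro Δ _ _ hfeas
  have hconstr : ∀ k, ∑ i, μh i * Δ i k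
      = (1+lam)⁻¹ * lam * ((if k = j then 1 else 0) - G j k) := by
    intro k
    have h := congrFun hfeas k
    simp only [Matrix.vecMul, dotProduct, Matrix.add_apply] at h
    rw [hsplit, hμhG k] at h
    rw [hμhv k] at h
    rcases eq_or_ne k j with h2 | h2
    · simp only [h2, eq_self_iff_true, if_true] at h ⊢
      linear_combination h
    · simp only [if_neg h2] at h ⊢
      linear_combination h
  have hμhle : ∀ i, μh i ≤ μh j := by
    intro i
    rw [hμhv i, hμhj]
    have := hlam2 i
    rcases eq_or_ne i j with h | h
    · subst h; simp
    · simp only [if_neg h, mul_zero, add_zero]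
      have : μ i ≤ μ j + lam := by linarith
      nlinarith [inv_pos.mpr h1l]
  have hμhnn : ∀ i, 0 ≤ μh i := by
    intro i
    rw [hμhv i]
    have := (hμpos i).le
    positivity
  have colbound : ∀ k, c * |(if k = j then (1:ℝ) else 0) - G j k| ≤ ∑ i, |Δ i k| := by
    intro k
    set x := (if k = j then (1:ℝ) else 0) - G j k with hx
    have h1 : |∑ i, μh i * Δ i k| ≤ μh j * ∑ i, |Δ i k| := by
      calc |∑ i, μh i * Δ i k| ≤ ∑ i, |μh i * Δ i k| := Finset.abs_sum_le_sum_abs _ _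
        _ ≤ ∑ i, μh j * |Δ i k| := by
            refine Finset.sum_le_sum fun i _ => ?_
            rw [abs_mul, abs_of_nonneg (hμhnn i)]
            exact mul_le_mul_of_nonneg_right (hμhle i) (abs_nonneg _)
        _ = μh j * ∑ i, |Δ i k| := (Finset.mul_sum _ _ _).symm
    rw [hconstr k, ← hx] at h1
    have h2 : |(1+lam)⁻¹ * lam * x| = (1+lam)⁻¹ * lam * |x| := by
      rw [abs_mul, abs_of_pos (by positivity : (0:ℝ) < (1+lam)⁻¹ * lam)]
    rw [h2] at h1
    rw [← mul_le_mul_iff_of_pos_right hμhjpos]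
    nlinarith [h1, hkey, abs_nonneg x]
  calc ∑ i, ∑ k, |Δstar i k| = ∑ k, ∑ i, |Δstar i k| := Finset.sum_comm
    _ = ∑ k, c * |(if k = j then (1:ℝ) else 0) - G j k| := by
        refine Finset.sum_congr rfl fun k _ => ?_
        simp only [hΔ]
        rw [Finset.sum_eq_single j]
        · rw [if_pos rfl, abs_mul, abs_of_pos hc0]
        · intro i _ h; simp [h]
        · intro h; exact absurd (Finset.mem_univ j) h
    _ ≤ ∑ k, ∑ i, |Δ i k| := Finset.sum_le_sum fun k _ => colbound k
    _ = ∑ i, ∑ k, |Δ i k| := Finset.sum_comm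
end

section
/- Let G be an n×n row-stochastic matrix, let μ̂ ∈ ℝ^n have μ̂_k > 0 for all k, and let i be an index with μ̂ᵢ = max_k μ̂_k. Define the rank-one matrix Δ* := (1/μ̂ᵢ)·eᵢ·(μ̂^⊤(I − G)), i.e., the i-th row of Δ* equals (1/μ̂ᵢ)·μ̂^⊤(I − G) and all other rows are zero. Then μ̂^⊤ Δ* = μ̂^⊤(I − G), Δ*·1ₙ = 0, and for every Δ ∈ ℝ^{n×n} with μ̂^⊤ Δ = μ̂^⊤(I − G) one has ∑_{k,l} |Δ*_{k,l}| ≤ ∑_{k,l} |Δ_{k,l}|. In other words, there exists a rank-one optimal solution, for the component-wise ℓ1 norm, of the target stationary distribution problem without the nonnegativity constraint. -/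
open Matrix BigOperators

/-- With `μ̂ > 0` and `μ̂ᵢ = max_k μ̂_k`, the rank-one matrix
`Δ* = (1/μ̂ᵢ)·eᵢ·(μ̂ᵀ(I − G))` (its `i`-th row is `(1/μ̂ᵢ)·μ̂ᵀ(I − G)`, all
other rows zero) satisfies `μ̂ᵀΔ* = μ̂ᵀ(I − G)`, `Δ*·1 = 0`, and minimizes the
component-wise ℓ1 norm among all `Δ` with `μ̂ᵀΔ = μ̂ᵀ(I − G)`. -/
theorem stmt12 {n : ℕ} (G : Matrix (Fin n) (Fin n) ℝ)
    (hGnonneg : ∀ i j, 0 ≤ G i j) (hGrow : ∀ i, ∑ j, G i j = 1)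
    (μh : Fin n → ℝ) (hμhpos : ∀ k, 0 < μh k)
    (i : Fin n) (hi : ∀ k, μh k ≤ μh i)
    (Δstar : Matrix (Fin n) (Fin n) ℝ)
    (hΔstar : Δstar = Matrix.vecMulVec (Pi.single i 1 : Fin n → ℝ)
      ((1 / μh i) • Matrix.vecMul μh (1 - G))) :
    Matrix.vecMul μh Δstar = Matrix.vecMul μh (1 - G) ∧
    (Δstar *ᵥ (fun _ => (1 : ℝ)) = 0) ∧
    (∀ Δ : Matrix (Fin n) (Fin n) ℝ,
      Matrix.vecMul μh Δ = Matrix.vecMul μh (1 - G) →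
      ∑ k, ∑ l, |Δstar k l| ≤ ∑ k, ∑ l, |Δ k l|) := by
  set v : Fin n → ℝ := Matrix.vecMul μh (1 - G) with hv
  have hμi : μh i ≠ 0 := ne_of_gt (hμhpos i)
  have happ : ∀ k l, Δstar k l = (Pi.single i 1 : Fin n → ℝ) k * ((1 / μh i) * v l) := by
    intro k l
    simp [hΔstar, Matrix.vecMulVec_apply]
    ring
  have hsingle : ∀ (k : Fin n), (Pi.single i 1 : Fin n → ℝ) k = if k = i then 1 else 0 := by
    intro k
    by_cases h : k = i
    · subst h; simp
    · simp [Pi.single_apply, h]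
  refine ⟨?_, ?_, ?_⟩
  · funext l
    rw [Matrix.vecMul, hv]
    simp only [dotProduct, happ, hsingle]
    rw [Finset.sum_eq_single i]
    · field_simp; simp [hv]
    · intro b _ hb; simp [hb]
    · intro h; exact absurd (Finset.mem_univ i) h
  · funext k
    rw [Matrix.mulVec, dotProduct]
    simp only [happ, mul_one, Pi.zero_apply]
    rw [← Finset.mul_sum]
    have hvsum : ∑ l, v l = 0 := by
      rw [hv]
      simp only [Matrix.vecMul, dotProduct, Matrix.sub_apply]
      rw [Finset.sum_comm]
      apply Finset.sum_eq_zero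
      intro k _
      rw [← Finset.mul_sum]
      have h1 : ∑ l, ((1 : Matrix (Fin n) (Fin n) ℝ) k l - G k l) = 0 := by
        simp only [Matrix.one_apply, Finset.sum_sub_distrib, hGrow]
        simp
      rw [h1, mul_zero]
    rw [← Finset.mul_sum, hvsum, mul_zero, mul_zero]
  · intro Δ hΔ
    have hstar : ∑ k, ∑ l, |Δstar k l| = (1 / μh i) * ∑ l, |v l| := by
      simp only [happ, hsingle]
      rw [Finset.sum_eq_single i]
      · rw [Finset.mul_sum]
        congr 1; funext l
        rw [if_pos rfl, one_mul, abs_mul,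
          abs_of_nonneg (div_nonneg zero_le_one (hμhpos i).le)]
      · intro b _ hb; simp [hb]
      · intro h; exact absurd (Finset.mem_univ i) h
    rw [hstar]
    have key : ∀ l, |v l| ≤ μh i * ∑ k, |Δ k l| := by
      intro l
      have : v l = ∑ k, μh k * Δ k l := by
        rw [← hΔ]; simp [Matrix.vecMul, dotProduct]
      rw [this, Finset.mul_sum]
      calc |∑ k, μh k * Δ k l| ≤ ∑ k, |μh k * Δ k l| := Finset.abs_sum_le_sum_abs _ _
        _ ≤ ∑ k, μh i * |Δ k l| := by
            apply Finset.sum_le_sum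
            intro k _
            rw [abs_mul, abs_of_pos (hμhpos k)]
            exact mul_le_mul_of_nonneg_right (hi k) (abs_nonneg _)
    calc (1 / μh i) * ∑ l, |v l| ≤ (1 / μh i) * ∑ l, μh i * ∑ k, |Δ k l| := by
          apply mul_le_mul_of_nonneg_left (Finset.sum_le_sum fun l _ => key l) (div_nonneg zero_le_one (hμhpos i).le)
      _ = ∑ l, ∑ k, |Δ k l| := by rw [← Finset.mul_sum]; field_simp
      _ = ∑ k, ∑ l, |Δ k l| := Finset.sum_comm
end

section
/- Let G be an n×n row-stochastic matrix, let μ̂ ∈ ℝ^n be positive with ∑ᵢ μ̂ᵢ = 1, and let Ω ⊆ {1,…,n}×{1,…,n}. Consider the feasible set D_Ω := {Δ ∈ ℝ^{n×n} : Δ·1ₙ = 0, μ̂^⊤ Δ = μ̂^⊤(I − G), G + Δ ≥ 0, and Δ_{i,j} = 0 for all (i,j) ∉ Ω}. If D_Ω is nonempty, then there exists Δ* ∈ D_Ω that minimizes the component-wise ℓ1 norm over D_Ω (i.e., ∑_{i,j}|Δ*_{i,j}| ≤ ∑_{i,j}|Δ_{i,j}| for every Δ ∈ D_Ω) and whose number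 of nonzero entries satisfies |{(i,j) : Δ*_{i,j} ≠ 0}| ≤ min(|Ω|, |{(i,j) ∈ Ω : G_{i,j} ≠ 0}| + 2n). -/
open Matrix BigOperators

/-- Feasible set of the TSDP with support constraint `Ω`: matrices `Δ` with
`Δ·1 = 0`, `μ̂ᵀΔ = μ̂ᵀ(I − G)` (i.e., `μ̂ᵀ(G + Δ) = μ̂ᵀ`), `G + Δ ≥ 0`, and
`Δ_{ij} = 0` for `(i,j) ∉ Ω`. -/
def feasSet {n : ℕ} (G : Matrix (Fin n) (Fin n) ℝ) (μh : Fin n → ℝ)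
    (Ω : Finset (Fin n × Fin n)) : Set (Matrix (Fin n) (Fin n) ℝ) :=
  {Δ | Δ *ᵥ (fun _ => (1 : ℝ)) = 0 ∧
    Matrix.vecMul μh (G + Δ) = μh ∧
    (∀ i j, 0 ≤ (G + Δ) i j) ∧
    (∀ p : Fin n × Fin n, p ∉ Ω → Δ p.1 p.2 = 0)}

private lemma feas_rowsum {n : ℕ} {G : Matrix (Fin n) (Fin n) ℝ} {μh : Fin n → ℝ}
    {Ω : Finset (Fin n × Fin n)} {Δ : Matrix (Fin n) (Fin n) ℝ}
    (h : Δ ∈ feasSet G μh Ω) (i : Fin n) : ∑ j, Δ i j = 0 := by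
  have := congrFun h.1 i
  simpa [Matrix.mulVec, dotProduct] using this

private lemma exists_l1_min {n : ℕ} (G : Matrix (Fin n) (Fin n) ℝ)
    (hGnonneg : ∀ i j, 0 ≤ G i j) (hGrow : ∀ i, ∑ j, G i j = 1)
    (μh : Fin n → ℝ) (Ω : Finset (Fin n × Fin n))
    (hfeas : (feasSet G μh Ω).Nonempty) :
    ∃ Δ₀ ∈ feasSet G μh Ω, ∀ Δ ∈ feasSet G μh Ω,
      ∑ i, ∑ j, |Δ₀ i j| ≤ ∑ i, ∑ j, |Δ i j| := by
  have hGle1 : ∀ i j, G i j ≤ 1 := by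
    intro i j
    rw [← hGrow i]
    exact Finset.single_le_sum (fun k _ => hGnonneg i k) (Finset.mem_univ j)
  have hbound : ∀ Δ ∈ feasSet G μh Ω, ∀ i j, Δ i j ∈ Set.Icc (-2:ℝ) 2 := by
    intro Δ hΔ i j
    have hrow : ∑ k, (G i k + Δ i k) = 1 := by
      rw [Finset.sum_add_distrib, hGrow i, feas_rowsum hΔ i, add_zero]
    have hnn : ∀ k, 0 ≤ G i k + Δ i k := fun k => hΔ.2.2.1 i k
    have hle : G i j + Δ i j ≤ 1 := by
      rw [← hrow]
      exact Finset.single_le_sum (fun k _ => hnn k) (Finset.mem_univ j)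
    have h0 := hnn j
    have := hGnonneg i j
    have := hGle1 i j
    exact Set.mem_Icc.2 ⟨by linarith, by linarith⟩
  have hclosed : IsClosed (feasSet G μh Ω) := by
    have h1 : IsClosed {Δ : Matrix (Fin n) (Fin n) ℝ | Δ *ᵥ (fun _ => (1:ℝ)) = 0} := by
      apply isClosed_eq _ continuous_const
      apply continuous_pi; intro i
      simp only [Matrix.mulVec, dotProduct]
      exact continuous_finset_sum _ fun j _ =>
        (continuous_id.matrix_elem i j).mul continuous_const
    have h2 : IsClosed {Δ : Matrix (Fin n) (Fin n) ℝ | Matrix.vecMul μh (G + Δ) = μh} := by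
      apply isClosed_eq _ continuous_const
      apply continuous_pi; intro j
      simp only [Matrix.vecMul, dotProduct, Matrix.add_apply]
      exact continuous_finset_sum _ fun i _ =>
        continuous_const.mul (continuous_const.add (continuous_id.matrix_elem i j))
    have h3 : IsClosed {Δ : Matrix (Fin n) (Fin n) ℝ | ∀ i j, 0 ≤ (G + Δ) i j} := by
      have he : {Δ : Matrix (Fin n) (Fin n) ℝ | ∀ i j, 0 ≤ (G + Δ) i j} =
          ⋂ i, ⋂ j, {Δ : Matrix (Fin n) (Fin n) ℝ | 0 ≤ G i j + Δ i j} := by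
        ext Δ; simp [Matrix.add_apply]
      rw [he]
      exact isClosed_iInter fun i => isClosed_iInter fun j =>
        isClosed_le continuous_const (continuous_const.add (continuous_id.matrix_elem i j))
    have h4 : IsClosed {Δ : Matrix (Fin n) (Fin n) ℝ |
        ∀ p : Fin n × Fin n, p ∉ Ω → Δ p.1 p.2 = 0} := by
      have he : {Δ : Matrix (Fin n) (Fin n) ℝ | ∀ p : Fin n × Fin n, p ∉ Ω → Δ p.1 p.2 = 0} =
          ⋂ p ∈ (Ωᶜ : Finset (Fin n × Fin n)), {Δ : Matrix (Fin n) (Fin n) ℝ | Δ p.1 p.2 = 0} := by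
        ext Δ; simp
      rw [he]
      exact isClosed_biInter fun p _ =>
        isClosed_eq (continuous_id.matrix_elem p.1 p.2) continuous_const
    exact ((h1.inter (h2.inter (h3.inter h4))) : IsClosed _)
  have hK : IsCompact {Δ : Matrix (Fin n) (Fin n) ℝ | ∀ i j, Δ i j ∈ Set.Icc (-2:ℝ) 2} := by
    have he : {Δ : Matrix (Fin n) (Fin n) ℝ | ∀ i j, Δ i j ∈ Set.Icc (-2:ℝ) 2} =
        Set.pi Set.univ (fun _ : Fin n => Set.pi Set.univ fun _ : Fin n => Set.Icc (-2:ℝ) 2) := by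
      ext Δ; exact ⟨fun h i _ j _ => h i j, fun h i j => h i trivial j trivial⟩
    rw [he]
    exact isCompact_univ_pi fun _ => isCompact_univ_pi fun _ => isCompact_Icc
  have hcompact : IsCompact (feasSet G μh Ω) :=
    hK.of_isClosed_subset hclosed (fun Δ hΔ i j => hbound Δ hΔ i j)
  have hcont : Continuous (fun Δ : Matrix (Fin n) (Fin n) ℝ => ∑ i, ∑ j, |Δ i j|) :=
    continuous_finset_sum _ fun i _ => continuous_finset_sum _ fun j _ =>
      (continuous_id.matrix_elem i j).abs
  obtain ⟨Δ₀, hΔ₀, hmin⟩ := hcompact.exists_isMinOn hfeas hcont.continuousOn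
  exact ⟨Δ₀, hΔ₀, fun Δ hΔ => hmin hΔ⟩
private lemma exists_kernel {n : ℕ} (μ : Fin n → ℝ) (S : Finset (Fin n × Fin n))
    (hcard : 2 * n < S.card) :
    ∃ D : Matrix (Fin n) (Fin n) ℝ,
      (∀ p : Fin n × Fin n, p ∉ S → D p.1 p.2 = 0) ∧
      (∀ i, ∑ j, D i j = 0) ∧ (∀ j, ∑ i, μ i * D i j = 0) ∧
      ∃ p ∈ S, D p.1 p.2 ≠ 0 := by
  classical
  let emb : ({p : Fin n × Fin n // p ∈ S} → ℝ) →ₗ[ℝ] (Fin n × Fin n → ℝ) :=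
    { toFun := fun x p => if h : p ∈ S then x ⟨p, h⟩ else 0
      map_add' := by intro x y; funext p; by_cases h : p ∈ S <;> simp [h]
      map_smul' := by intro c x; funext p; by_cases h : p ∈ S <;> simp [h] }
  let rowmap : (Fin n × Fin n → ℝ) →ₗ[ℝ] (Fin n → ℝ) :=
    { toFun := fun f i => ∑ j, f (i, j)
      map_add' := by intro x y; funext i; simp [Finset.sum_add_distrib]
      map_smul' := by intro c x; funext i; simp [Finset.mul_sum] }
  let colmap : (Fin n × Fin n → ℝ) →ₗ[ℝ] (Fin n → ℝ) :=
    { toFun := fun f j => ∑ i, μ i * f (i, j)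
      map_add' := by
        intro x y; funext j
        simp [mul_add, Finset.sum_add_distrib]
      map_smul' := by
        intro c x; funext j
        simp [Finset.mul_sum]; ring_nf
        exact Finset.sum_congr rfl fun i _ => by ring }
  let L := (rowmap.prod colmap).comp emb
  have hninj : ¬ Function.Injective L := by
    intro hinj
    have hle := LinearMap.finrank_le_finrank_of_injective hinj
    rw [Module.finrank_fintype_fun_eq_card] at hle
    simp only [Module.finrank_prod, Module.finrank_fintype_fun_eq_card,
      Fintype.card_fin, Fintype.card_coe] at hle
    omega
  have hker : ∃ x : {p : Fin n × Fin n // p ∈ S} → ℝ, x ≠ 0 ∧ L x = 0 := by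
    by_contra hc
    push_neg at hc
    apply hninj
    rw [← LinearMap.ker_eq_bot, Submodule.eq_bot_iff]
    intro x hx
    by_contra hx0
    exact (hc x hx0) hx
  obtain ⟨x, hx0, hLx⟩ := hker
  refine ⟨Matrix.of fun i j => emb x (i, j), ?_, ?_, ?_, ?_⟩
  · intro p hp
    simp only [Matrix.of_apply]
    show (if h : (p.1, p.2) ∈ S then x ⟨(p.1, p.2), h⟩ else 0) = 0
    rw [dif_neg]; simpa using hp
  · intro i
    have := congrFun (congrArg Prod.fst hLx) i
    simpa [L, rowmap] using this
  · intro j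
    have := congrFun (congrArg Prod.snd hLx) j
    simpa [L, colmap] using this
  · obtain ⟨s, hs⟩ := Function.ne_iff.1 hx0
    refine ⟨(s : Fin n × Fin n), s.2, ?_⟩
    simp only [Matrix.of_apply]
    show (if h : ((s : Fin n × Fin n).1, (s : Fin n × Fin n).2) ∈ S
        then x ⟨((s : Fin n × Fin n).1, (s : Fin n × Fin n).2), h⟩ else 0) ≠ 0
    rw [dif_pos]
    · simpa using hs
    · simpa using s.2

/-- If the TSDP with support constraint `Ω` is feasible, there is
a feasible `Δ*` minimizing the component-wise ℓ1 norm whose number of nonzero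
entries is at most `min(|Ω|, |{(i,j) ∈ Ω : G_{ij} ≠ 0}| + 2n)`. -/
theorem stmt13 {n : ℕ} (G : Matrix (Fin n) (Fin n) ℝ)
    (hGnonneg : ∀ i j, 0 ≤ G i j) (hGrow : ∀ i, ∑ j, G i j = 1)
    (μh : Fin n → ℝ) (hμhpos : ∀ i, 0 < μh i) (hμhsum : ∑ i, μh i = 1)
    (Ω : Finset (Fin n × Fin n))
    (hfeas : (feasSet G μh Ω).Nonempty) :
    ∃ Δstar ∈ feasSet G μh Ω,
      (∀ Δ ∈ feasSet G μh Ω,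
        ∑ i, ∑ j, |Δstar i j| ≤ ∑ i, ∑ j, |Δ i j|) ∧
      {p : Fin n × Fin n | Δstar p.1 p.2 ≠ 0}.ncard ≤
        min Ω.card
          ({p : Fin n × Fin n | p ∈ Ω ∧ G p.1 p.2 ≠ 0}.ncard + 2 * n) := by
  classical
  obtain ⟨Δ₀, hΔ₀, hmin₀⟩ := exists_l1_min G hGnonneg hGrow μh Ω hfeas
  have hex : ∃ k, ∃ Δ, (Δ ∈ feasSet G μh Ω ∧
      ∀ Δ' ∈ feasSet G μh Ω, ∑ i, ∑ j, |Δ i j| ≤ ∑ i, ∑ j, |Δ' i j|) ∧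
      (Finset.univ.filter fun p : Fin n × Fin n => G p.1 p.2 = 0 ∧ Δ p.1 p.2 ≠ 0).card = k :=
    ⟨_, Δ₀, ⟨hΔ₀, hmin₀⟩, rfl⟩
  obtain ⟨Δs, ⟨hΔs, hmins⟩, hcntk⟩ := Nat.find_spec hex
  obtain ⟨hs1, hs2, hs3, hs4⟩ := hΔs
  have hΔs : Δs ∈ feasSet G μh Ω := ⟨hs1, hs2, hs3, hs4⟩
  refine ⟨Δs, hΔs, hmins, ?_⟩
  set S : Finset (Fin n × Fin n) :=
    Finset.univ.filter (fun p : Fin n × Fin n => G p.1 p.2 = 0 ∧ Δs p.1 p.2 ≠ 0) with hSdef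
  have hSpos : ∀ p ∈ S, 0 < Δs p.1 p.2 := by
    intro p hp
    rw [hSdef, Finset.mem_filter] at hp
    obtain ⟨-, hg, hne⟩ := hp
    have h0 := hs3 p.1 p.2
    rw [Matrix.add_apply, hg, zero_add] at h0
    exact lt_of_le_of_ne h0 (Ne.symm hne)
  -- Key claim: |S| ≤ 2n
  have hcnt2n : S.card ≤ 2 * n := by
    by_contra hgt
    push_neg at hgt
    obtain ⟨D, hD0, hDrow, hDcol, p₁, hp₁S, hp₁⟩ := exists_kernel μh S hgt
    have hneg : ∃ q ∈ S, D q.1 q.2 < 0 := by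
      by_contra hc
      push_neg at hc
      have hDnn : ∀ i j, 0 ≤ D i j := by
        intro i j
        by_cases h : ((i, j) : Fin n × Fin n) ∈ S
        · exact hc (i, j) h
        · rw [hD0 (i, j) h]
      have hall : ∀ i j, D i j = 0 := fun i j =>
        (Finset.sum_eq_zero_iff_of_nonneg (fun k _ => hDnn i k)).1 (hDrow i) j (Finset.mem_univ j)
      exact hp₁ (hall p₁.1 p₁.2)
    obtain ⟨q, hqS, hqneg⟩ := hneg
    obtain ⟨p₀, hp₀mem, hp₀min⟩ := Finset.exists_min_image
      (S.filter fun p => D p.1 p.2 < 0) (fun p => Δs p.1 p.2 / (-(D p.1 p.2)))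
      ⟨q, Finset.mem_filter.2 ⟨hqS, hqneg⟩⟩
    rw [Finset.mem_filter] at hp₀mem
    obtain ⟨hp₀S, hp₀neg⟩ := hp₀mem
    set t : ℝ := Δs p₀.1 p₀.2 / (-(D p₀.1 p₀.2)) with htdef
    have ht : 0 < t := div_pos (hSpos p₀ hp₀S) (by linarith)
    set Δ' : Matrix (Fin n) (Fin n) ℝ := Δs + t • D with hΔ'def
    have hΔ'app : ∀ i j, Δ' i j = Δs i j + t * D i j := by
      intro i j; simp [hΔ'def, Matrix.add_apply, Matrix.smul_apply]
    have h3' : ∀ i j, 0 ≤ (G + Δ') i j := by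
      intro i j
      rw [Matrix.add_apply, hΔ'app i j]
      by_cases h : ((i, j) : Fin n × Fin n) ∈ S
      · have hg : G i j = 0 := by
          rw [hSdef, Finset.mem_filter] at h; exact h.2.1
        have hpos := hSpos (i, j) h
        rcases le_or_gt 0 (D i j) with hD | hD
        · nlinarith
        · have hmem : ((i, j) : Fin n × Fin n) ∈ S.filter fun p => D p.1 p.2 < 0 :=
            Finset.mem_filter.2 ⟨h, hD⟩
          have hle : t ≤ Δs i j / (-(D i j)) := hp₀min _ hmem
          have h2 : t * (-(D i j)) ≤ Δs i j :=
            (le_div_iff₀ (by linarith : (0:ℝ) < -(D i j))).1 hle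
          nlinarith
      · rw [hD0 (i, j) h, mul_zero, add_zero]
        have h0 := hs3 i j; rw [Matrix.add_apply] at h0; linarith
    have hfeas' : Δ' ∈ feasSet G μh Ω := by
      refine ⟨?_, ?_, h3', ?_⟩
      · funext i
        have he1 : (Δ' *ᵥ fun _ => (1:ℝ)) i = ∑ j, Δ' i j := by
          simp [Matrix.mulVec, dotProduct]
        have he2 : ∑ j, Δ' i j = ∑ j, Δs i j + t * ∑ j, D i j := by
          simp_rw [hΔ'app]; rw [Finset.sum_add_distrib, Finset.mul_sum]
        rw [he1, Pi.zero_apply, he2, feas_rowsum hΔs i, hDrow i, mul_zero, add_zero]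
      · funext j
        have key : ∀ i, μh i * ((G + Δ') i j) = μh i * ((G + Δs) i j) + t * (μh i * D i j) := by
          intro i; rw [Matrix.add_apply, Matrix.add_apply, hΔ'app]; ring
        calc Matrix.vecMul μh (G + Δ') j = ∑ i, μh i * ((G + Δ') i j) := by
              simp [Matrix.vecMul, dotProduct]
          _ = ∑ i, (μh i * ((G + Δs) i j) + t * (μh i * D i j)) :=
              Finset.sum_congr rfl fun i _ => key i
          _ = (∑ i, μh i * ((G + Δs) i j)) + t * ∑ i, μh i * D i j := by
              rw [Finset.sum_add_distrib, Finset.mul_sum]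
          _ = Matrix.vecMul μh (G + Δs) j + t * 0 := by
              rw [hDcol j]
              simp [Matrix.vecMul, dotProduct]
          _ = μh j := by rw [mul_zero, add_zero]; exact congrFun hs2 j
      · intro p hp
        have hΔsp : Δs p.1 p.2 = 0 := hs4 p hp
        have hpS : p ∉ S := by
          rw [hSdef, Finset.mem_filter]
          push_neg
          intro _ _
          simpa using hΔsp
        rw [hΔ'app, hΔsp, hD0 p hpS, mul_zero, add_zero]
    have habs : ∀ i j, |Δ' i j| = |Δs i j| + t * D i j := by
      intro i j
      by_cases h : ((i, j) : Fin n × Fin n) ∈ S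
      · have hg : G i j = 0 := by
          rw [hSdef, Finset.mem_filter] at h; exact h.2.1
        have h0' := h3' i j
        rw [Matrix.add_apply, hg, zero_add, hΔ'app] at h0'
        have hpos := hSpos (i, j) h
        rw [hΔ'app, abs_of_nonneg h0', abs_of_pos hpos]
      · rw [hΔ'app, hD0 (i, j) h]; ring
    have hnorm : ∑ i, ∑ j, |Δ' i j| = ∑ i, ∑ j, |Δs i j| :=
      Finset.sum_congr rfl fun i _ => by
        simp_rw [habs]
        rw [Finset.sum_add_distrib, ← Finset.mul_sum, hDrow i, mul_zero, add_zero]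
    have hmins' : ∀ Δ ∈ feasSet G μh Ω,
        ∑ i, ∑ j, |Δ' i j| ≤ ∑ i, ∑ j, |Δ i j| := by
      intro Δ hΔ; rw [hnorm]; exact hmins Δ hΔ
    have hd : D p₀.1 p₀.2 ≠ 0 := ne_of_lt hp₀neg
    have hΔ'p₀ : Δ' p₀.1 p₀.2 = 0 := by
      rw [hΔ'app, htdef, div_neg, neg_mul, div_mul_cancel₀ _ hd]
      ring
    have hsub : (Finset.univ.filter fun p : Fin n × Fin n => G p.1 p.2 = 0 ∧ Δ' p.1 p.2 ≠ 0)
        ⊆ S.erase p₀ := by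
      intro p hp
      rw [Finset.mem_filter] at hp
      obtain ⟨-, hg, hne⟩ := hp
      have hpS : p ∈ S := by
        by_contra hpS
        have hDz := hD0 p hpS
        have hΔsp : Δs p.1 p.2 = 0 := by
          by_contra hz
          exact hpS (by rw [hSdef]; exact Finset.mem_filter.2 ⟨Finset.mem_univ _, hg, hz⟩)
        exact hne (by rw [hΔ'app, hΔsp, hDz, mul_zero, add_zero])
      refine Finset.mem_erase.2 ⟨?_, hpS⟩
      intro hpe
      rw [hpe] at hne
      exact hne hΔ'p₀
    have hlt : (Finset.univ.filter fun p : Fin n × Fin n =>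
        G p.1 p.2 = 0 ∧ Δ' p.1 p.2 ≠ 0).card < S.card := by
      have h1 := Finset.card_le_card hsub
      have h2 := Finset.card_erase_lt_of_mem hp₀S
      omega
    have hbad := Nat.find_min hex (show (Finset.univ.filter fun p : Fin n × Fin n =>
        G p.1 p.2 = 0 ∧ Δ' p.1 p.2 ≠ 0).card < Nat.find hex from hcntk ▸ hlt)
    exact hbad ⟨Δ', ⟨hfeas', hmins'⟩, rfl⟩
  -- conclude
  have hAset : {p : Fin n × Fin n | Δs p.1 p.2 ≠ 0} =
      ↑(Finset.univ.filter fun p : Fin n × Fin n => Δs p.1 p.2 ≠ 0) := by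
    ext p; simp
  have hBset : {p : Fin n × Fin n | p ∈ Ω ∧ G p.1 p.2 ≠ 0} =
      ↑(Ω.filter fun p : Fin n × Fin n => G p.1 p.2 ≠ 0) := by
    ext p; simp
  rw [hAset, hBset, Set.ncard_coe_finset, Set.ncard_coe_finset]
  apply le_min
  · apply Finset.card_le_card
    intro p hp
    rw [Finset.mem_filter] at hp
    by_contra hpΩ
    exact hp.2 (hs4 p hpΩ)
  · calc (Finset.univ.filter fun p : Fin n × Fin n => Δs p.1 p.2 ≠ 0).card
        ≤ ((Ω.filter fun p : Fin n × Fin n => G p.1 p.2 ≠ 0) ∪ S).card := by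
          apply Finset.card_le_card
          intro p hp
          rw [Finset.mem_filter] at hp
          rw [Finset.mem_union]
          by_cases hg : G p.1 p.2 = 0
          · right; rw [hSdef]; exact Finset.mem_filter.2 ⟨Finset.mem_univ _, hg, hp.2⟩
          · left
            refine Finset.mem_filter.2 ⟨?_, hg⟩
            by_contra hpΩ
            exact hp.2 (hs4 p hpΩ)
      _ ≤ (Ω.filter fun p : Fin n × Fin n => G p.1 p.2 ≠ 0).card + S.card :=
          Finset.card_union_le _ _
      _ ≤ _ := by omega
end

section
/- Let μ, μ̂ ∈ ℝ^n be positive vectors, and let σ, τ be permutations of {1,…,n} such that the sequences (μ_{σ(1)},…,μ_{σ(n)}) and (μ̂_{τ(1)},…,μ̂_{τ(n)}) are both non-decreasing. Then minᵢ (μᵢ/μ̂ᵢ) ≤ minᵢ (μ_{σ(i)}/μ̂_{τ(i)}) and maxᵢ (μ_{σ(i)}/μ̂_{τ(i)}) ≤ maxᵢ (μᵢ/μ̂ᵢ); that is, the interval [minᵢ μ_{σ(i)}/μ̂_{τ(i)}, maxᵢ μ_{σ(i)}/μ̂_{τ(i)}] is contained in the interval [minᵢ μᵢ/μ̂ᵢ,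 maxᵢ μᵢ/μ̂ᵢ]. -/
/-!
The `i + 1` indices `σ 0, …, σ i` and the `n - i` indices `τ i, …, τ (n - 1)` cannot be disjoint,
so some `j` has `μ j ≤ μ (σ i)` and `μh (τ i) ≤ μh j`, whence `μ j / μh j ≤ μ (σ i) / μh (τ i)`.
Exchanging the roles of `σ` and `τ` gives an index `j` with `μ (σ i) / μh (τ i) ≤ μ j / μh j`.
-/

open Finset in
theorem Equiv.Perm.exists_le_exists_ge_apply_eq {n : ℕ} (σ τ : Equiv.Perm (Fin n)) (i : Fin n) :
    ∃ k ≤ i, ∃ l ≥ i, σ k = τ l := by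
  have hcard : #(univ : Finset (Fin n)) <
      #((Iic i).map σ.toEmbedding) + #((Ici i).map τ.toEmbedding) := by
    simp only [card_univ, Fintype.card_fin, card_map, Fin.card_Iic, Fin.card_Ici]
    omega
  obtain ⟨j, hj⟩ := inter_nonempty_of_card_lt_card_add_card (subset_univ _) (subset_univ _) hcard
  simp only [mem_inter, mem_map_equiv, mem_Iic, mem_Ici] at hj
  exact ⟨σ.symm j, hj.1, τ.symm j, hj.2, by simp⟩

theorem exists_le_apply_and_apply_le_of_monotone_comp {α β : Type*} [Preorder α] [Preorder β]
    {n : ℕ} {f : Fin n → α} {g : Fin n → β} {σ τ : Equiv.Perm (Fin n)}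
    (hσ : Monotone fun i => f (σ i)) (hτ : Monotone fun i => g (τ i)) (i : Fin n) :
    ∃ j, f j ≤ f (σ i) ∧ g (τ i) ≤ g j := by
  obtain ⟨k, hki, l, hil, hkl⟩ := σ.exists_le_exists_ge_apply_eq τ i
  exact ⟨σ k, hσ hki, hkl ▸ hτ hil⟩

section SortedRatios

variable {n : ℕ} {μ μh : Fin n → ℝ} {σ τ : Equiv.Perm (Fin n)}

theorem iInf_div_le_iInf_div_perm (hμ : ∀ i, 0 ≤ μ i) (hμh : ∀ i, 0 < μh i)
    (hσ : Monotone fun i => μ (σ i)) (hτ : Monotone fun i => μh (τ i)) :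
    ⨅ i, μ i / μh i ≤ ⨅ i, μ (σ i) / μh (τ i) := by
  cases isEmpty_or_nonempty (Fin n)
  · simp [Real.iInf_of_isEmpty]
  refine ciInf_mono_of_forall_exists (Finite.bddBelow_range _) fun i => ?_
  obtain ⟨j, hμj, hμhj⟩ := exists_le_apply_and_apply_le_of_monotone_comp hσ hτ i
  exact ⟨j, div_le_div₀ (hμ _) hμj (hμh _) hμhj⟩

theorem iSup_div_perm_le_iSup_div (hμ : ∀ i, 0 ≤ μ i) (hμh : ∀ i, 0 < μh i)
    (hσ : Monotone fun i => μ (σ i)) (hτ : Monotone fun i => μh (τ i)) :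
    ⨆ i, μ (σ i) / μh (τ i) ≤ ⨆ i, μ i / μh i := by
  cases isEmpty_or_nonempty (Fin n)
  · simp [Real.iSup_of_isEmpty]
  refine ciSup_mono_of_forall_exists (Finite.bddAbove_range _) fun i => ?_
  obtain ⟨j, hμhj, hμj⟩ := exists_le_apply_and_apply_le_of_monotone_comp hτ hσ i
  exact ⟨j, div_le_div₀ (hμ _) hμj (hμh _) hμhj⟩

end SortedRatios

/-- If `σ, τ` are permutations sorting `μ` and `μ̂` into
non-decreasing order, then
`[minᵢ μ_{σ(i)}/μ̂_{τ(i)}, maxᵢ μ_{σ(i)}/μ̂_{τ(i)}] ⊆ [minᵢ μᵢ/μ̂ᵢ, maxᵢ μᵢ/μ̂ᵢ]`. -/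
theorem stmt14 {n : ℕ} (μ μh : Fin n → ℝ)
    (hμpos : ∀ i, 0 < μ i) (hμhpos : ∀ i, 0 < μh i)
    (σ τ : Equiv.Perm (Fin n))
    (hσ : Monotone fun i => μ (σ i))
    (hτ : Monotone fun i => μh (τ i)) :
    ((⨅ i, μ i / μh i) ≤ ⨅ i, μ (σ i) / μh (τ i)) ∧
    ((⨆ i, μ (σ i) / μh (τ i)) ≤ ⨆ i, μ i / μh i) ∧
    Set.Icc (⨅ i, μ (σ i) / μh (τ i)) (⨆ i, μ (σ i) / μh (τ i)) ⊆
      Set.Icc (⨅ i, μ i / μh i) (⨆ i, μ i / μh i) := by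
  have hμ : ∀ i, 0 ≤ μ i := fun i => (hμpos i).le
  have hinf := iInf_div_le_iInf_div_perm hμ hμhpos hσ hτ
  have hsup := iSup_div_perm_le_iSup_div hμ hμhpos hσ hτ
  exact ⟨hinf, hsup, Set.Icc_subset_Icc hinf hsup⟩
end

section
/- Let μ, μ̂ ∈ ℝ^n be positive vectors, assume the entries of μ̂ are non-decreasing (0 < μ̂₁ ≤ μ̂₂ ≤ … ≤ μ̂ₙ), and let σ be a permutation of {1,…,n} such that the sequence (μ_{σ(1)},…,μ_{σ(n)}) is non-decreasing. Then minᵢ (μᵢ/μ̂ᵢ) ≤ minᵢ (μ_{σ(i)}/μ̂ᵢ) and maxᵢ (μ_{σ(i)}/μ̂ᵢ) ≤ maxᵢ (μᵢ/μ̂ᵢ); that is, [minᵢ μ_{σ(i)}/μ̂ᵢ, maxᵢ μ_{σ(i)}/μ̂ᵢ] ⊆ [minᵢ μᵢ/μ̂ᵢ, maxᵢ μᵢ/μ̂ᵢ]. -/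
/-! An injective self-map `σ` of `{1, …, n}` cannot send all of `{1, …, i}` below `i`, so some
`k ≤ i` has `i ≤ σ k`. For monotone `μ ∘ σ` and `μ̂` this gives `μ_{σ k} / μ̂_{σ k} ≤ μ_{σ i} / μ̂_i`,
which bounds the minimum; the maximum is the order dual. -/

namespace Function.Injective

variable {α : Type*} [LinearOrder α] {f : α → α}

theorem exists_le_le_apply [LocallyFiniteOrderBot α] (hf : Injective f) (a : α) :
    ∃ b ≤ a, a ≤ f b := by
  by_contra! h
  have hmaps : Set.MapsTo f (Finset.Iic a) (Finset.Iio a) := fun b hb ↦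
    Finset.mem_Iio.2 (h b (Finset.mem_Iic.1 hb))
  have hcard := Finset.card_le_card_of_injOn f hmaps hf.injOn
  have hpos : 0 < (Finset.Iic a).card := Finset.card_pos.2 ⟨a, Finset.mem_Iic.2 le_rfl⟩
  rw [Finset.card_Iio_eq_card_Iic_sub_one] at hcard
  omega

theorem exists_ge_apply_le [LocallyFiniteOrderTop α] (hf : Injective f) (a : α) :
    ∃ b, a ≤ b ∧ f b ≤ a :=
  exists_le_le_apply (α := αᵒᵈ) hf a

end Function.Injective

section RatioBounds

variable {ι : Type*} [LinearOrder ι] {σ : ι → ι} {μ ν : ι → ℝ}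

theorem exists_div_le_comp_div [LocallyFiniteOrderBot ι] (hσ : σ.Injective)
    (hμ : ∀ i, 0 ≤ μ i) (hν : ∀ i, 0 < ν i) (hν_mono : Monotone ν)
    (hμσ : Monotone (μ ∘ σ)) (i : ι) : ∃ j, μ j / ν j ≤ μ (σ i) / ν i := by
  obtain ⟨k, hki, hik⟩ := hσ.exists_le_le_apply i
  exact ⟨σ k, div_le_div₀ (hμ _) (hμσ hki) (hν i) (hν_mono hik)⟩

theorem exists_comp_div_le_div [LocallyFiniteOrderTop ι] (hσ : σ.Injective)
    (hμ : ∀ i, 0 ≤ μ i) (hν : ∀ i, 0 < ν i) (hν_mono : Monotone ν)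
    (hμσ : Monotone (μ ∘ σ)) (i : ι) : ∃ j, μ (σ i) / ν i ≤ μ j / ν j := by
  obtain ⟨k, hik, hki⟩ := hσ.exists_ge_apply_le i
  exact ⟨σ k, div_le_div₀ (hμ _) (hμσ hik) (hν _) (hν_mono hki)⟩

end RatioBounds

/-- If `μ̂` has non-decreasing entries and `σ` is a permutation
sorting `μ` into non-decreasing order, then
`[minᵢ μ_{σ(i)}/μ̂ᵢ, maxᵢ μ_{σ(i)}/μ̂ᵢ] ⊆ [minᵢ μᵢ/μ̂ᵢ, maxᵢ μᵢ/μ̂ᵢ]`. -/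
theorem stmt16 {n : ℕ} (μ μh : Fin n → ℝ)
    (hμpos : ∀ i, 0 < μ i) (hμhpos : ∀ i, 0 < μh i)
    (hμhmono : Monotone μh)
    (σ : Equiv.Perm (Fin n))
    (hσ : Monotone fun i => μ (σ i)) :
    ((⨅ i, μ i / μh i) ≤ ⨅ i, μ (σ i) / μh i) ∧
    ((⨆ i, μ (σ i) / μh i) ≤ ⨆ i, μ i / μh i) ∧
    Set.Icc (⨅ i, μ (σ i) / μh i) (⨆ i, μ (σ i) / μh i) ⊆
      Set.Icc (⨅ i, μ i / μh i) (⨆ i, μ i / μh i) := by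
  cases isEmpty_or_nonempty (Fin n)
  · simp [Real.iInf_of_isEmpty, Real.iSup_of_isEmpty]
  have hμ : ∀ i, 0 ≤ μ i := fun i ↦ (hμpos i).le
  have hmin : (⨅ i, μ i / μh i) ≤ ⨅ i, μ (σ i) / μh i :=
    ciInf_mono_of_forall_exists (Set.finite_range _).bddBelow
      (exists_div_le_comp_div σ.injective hμ hμhpos hμhmono hσ)
  have hmax : (⨆ i, μ (σ i) / μh i) ≤ ⨆ i, μ i / μh i :=
    ciSup_mono_of_forall_exists (Set.finite_range _).bddAbove
      (exists_comp_div_le_div σ.injective hμ hμhpos hμhmono hσ)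
  exact ⟨hmin, hmax, Set.Icc_subset_Icc hmin hmax⟩
end
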